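/- arXiv:2311.01271 — 3 statements merged into one kernel-verified Lean document; each statement's English description precedes it below -/
import Mathlib

section
/- Let λ, Λ > 0 and let 0 < r < 1 < R be real numbers with R·(1 − λ/Λ) < 1. Assume a is hermitian, |a(u,v)| ≤ Λ·‖u‖_V·‖v‖_V for all u,v ∈ V, and Re a(v,v) − (1/2)·∑_{n∈ℕ} ‖B_n v‖_H² ≥ λ·‖v‖_V² for all v ∈ V. Then for every z in the closed strip S̄ = {z ∈ ℂ : 0 ≤ Re z ≤ 1} and every v ∈ V: Re( F(z)·(a(v,v) − Λ·‖v‖_V²) + Λ·‖v‖_V² ) − (|F(z)|/2)·∑_{n∈ℕ} ‖B_n v‖_H² ≥ Λ·(1 − R·(1 − λ/Λ))·‖v‖_V², and the constant Λ·(1 − R·(1 − λ/Λ)) is strictly positive. (The left-hand side equals Re a_z(v,v) − (1/2)‖B_z v‖² for the perturbed family a_z = Λ(F(z)(Λ⁻¹a − a₀) + a₀) with a₀(u,v) = ⟨u,v⟩_V and B_z = F(z)^{1/2} B; thus the perturbed family is coercive uniformly in z ∈ S̄.) -/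
/-!
Since `a` is hermitian, `a(v,v)` is real and at most `Λ‖v‖²`, so `Re (F(z)(a(v,v) − Λ‖v‖²))`
is at least `|F(z)|(a(v,v) − Λ‖v‖²)`. The left-hand side is therefore at least
`Λ‖v‖² + |F(z)|·X` with `X = a(v,v) − ½∑ₙ‖Bₙv‖² − Λ‖v‖²`, which lies in `[(λ − Λ)‖v‖², 0]`
by coercivity and boundedness. On the strip `|F(z)| = r(R/r)^{Re z} ≤ R`, so `|F(z)|·X ≥ R(λ − Λ)‖v‖²`.
-/

open Complex

lemma norm_ofReal_mul_exp_mul_log_div_le {r R : ℝ} (hr : 0 < r) (hrR : r ≤ R) {z : ℂ}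
    (hz : z.re ≤ 1) : ‖(r : ℂ) * exp (z * (Real.log (R / r) : ℂ))‖ ≤ R := by
  have hlog : 0 ≤ Real.log (R / r) := Real.log_nonneg ((one_le_div hr).2 hrR)
  have hexp : Real.exp (z.re * Real.log (R / r)) ≤ R / r := by
    calc Real.exp (z.re * Real.log (R / r)) ≤ Real.exp (Real.log (R / r)) := by
          gcongr; nlinarith
      _ = R / r := Real.exp_log (div_pos (hr.trans_le hrR) hr)
  rw [norm_mul, norm_real, Real.norm_of_nonneg hr.le, norm_exp, re_mul_ofReal]
  calc r * Real.exp (z.re * Real.log (R / r)) ≤ r * (R / r) := by gcongr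
    _ = R := mul_div_cancel₀ R hr.ne'

lemma sub_mul_mul_le_re_mul_sub_add {f w : ℂ} {lam Lam R N S : ℝ} (hw : w.im = 0)
    (hw_le : w.re ≤ Lam * N) (hS : 0 ≤ S) (hcoer : lam * N ≤ w.re - 1 / 2 * S)
    (hf : ‖f‖ ≤ R) :
    (Lam - R * (Lam - lam)) * N ≤
      (f * (w - ((Lam * N : ℝ) : ℂ)) + ((Lam * N : ℝ) : ℂ)).re - ‖f‖ / 2 * S := by
  have hR : 0 ≤ R := (norm_nonneg f).trans hf
  have hre : (f * (w - ((Lam * N : ℝ) : ℂ)) + ((Lam * N : ℝ) : ℂ)).re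
      = f.re * (w.re - Lam * N) + Lam * N := by
    simp [mul_re, hw]
  have hX : w.re - 1 / 2 * S - Lam * N ≤ 0 := by linarith
  calc (Lam - R * (Lam - lam)) * N = Lam * N + R * ((lam - Lam) * N) := by ring
    _ ≤ Lam * N + R * (w.re - 1 / 2 * S - Lam * N) := by gcongr; linarith
    _ ≤ Lam * N + ‖f‖ * (w.re - 1 / 2 * S - Lam * N) :=
        add_le_add_right (mul_le_mul_of_nonpos_right hf hX) _
    _ = ‖f‖ * (w.re - Lam * N) + Lam * N - ‖f‖ / 2 * S := by ring
    _ ≤ f.re * (w.re - Lam * N) + Lam * N - ‖f‖ / 2 * S := by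
        gcongr ?_ + _ - _
        exact mul_le_mul_of_nonpos_right (re_le_norm f) (by linarith)
    _ = _ := by rw [hre]

theorem perturbed_family_uniformly_coercive_general
    {V : Type*} [NormedAddCommGroup V] [InnerProductSpace ℂ V]
    {H : Type*} [NormedAddCommGroup H] [InnerProductSpace ℂ H]
    (a : V → V → ℂ) (B : ℕ → V →L[ℂ] H) (lam Lam r R : ℝ)
    (hLam : 0 < Lam)
    (hr0 : 0 < r) (hr1 : r < 1) (hR1 : 1 < R)
    (hRrho : R * (1 - lam / Lam) < 1)
    (F : ℂ → ℂ) (hF : ∀ z : ℂ, F z = (r : ℂ) * Complex.exp (z * (Real.log (R / r) : ℂ)))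
    (ha_herm : ∀ u v : V, a u v = starRingEnd ℂ (a v u))
    (hbdd : ∀ u v : V, ‖a u v‖ ≤ Lam * ‖u‖ * ‖v‖)
    (hcoer : ∀ v : V,
      lam * ‖v‖ ^ 2 ≤ (a v v).re - (1 / 2) * ∑' n : ℕ, ‖B n v‖ ^ 2) :
    0 < Lam * (1 - R * (1 - lam / Lam)) ∧
      ∀ z : ℂ, 0 ≤ z.re → z.re ≤ 1 → ∀ v : V,
        Lam * (1 - R * (1 - lam / Lam)) * ‖v‖ ^ 2 ≤
          (F z * (a v v - ((Lam * ‖v‖ ^ 2 : ℝ) : ℂ)) + ((Lam * ‖v‖ ^ 2 : ℝ) : ℂ)).re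
            - (‖F z‖ / 2) * ∑' n : ℕ, ‖B n v‖ ^ 2 := by
  refine ⟨mul_pos hLam (by linarith), fun z _ hz v => ?_⟩
  have hFR : ‖F z‖ ≤ R :=
    hF z ▸ norm_ofReal_mul_exp_mul_log_div_le hr0 (by linarith) hz
  have ha_im : (a v v).im = 0 := conj_eq_iff_im.1 (ha_herm v v).symm
  have ha_le : (a v v).re ≤ Lam * ‖v‖ ^ 2 :=
    (re_le_norm _).trans (by simpa [sq, mul_assoc] using hbdd v v)
  have hS : 0 ≤ ∑' n : ℕ, ‖B n v‖ ^ 2 := tsum_nonneg fun n => by positivity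
  have hconst : Lam * (1 - R * (1 - lam / Lam)) = Lam - R * (Lam - lam) := by
    field_simp
  rw [hconst]
  exact sub_mul_mul_le_re_mul_sub_add ha_im ha_le hS (hcoer v) hFR

/-- Let `λ, Λ > 0` and `0 < r < 1 < R` with `R(1 − λ/Λ) < 1`. Assume
`a` is a hermitian sesquilinear form on `V`, bounded by `Λ`, and coercive:
`Re a(v,v) − (1/2)∑ₙ‖Bₙv‖² ≥ λ‖v‖²`. With `F(z) = r·exp(z·log(R/r))`, for every `z`
in the closed strip `0 ≤ Re z ≤ 1` and every `v ∈ V`,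
`Re( F(z)(a(v,v) − Λ‖v‖²) + Λ‖v‖² ) − (|F(z)|/2)·∑ₙ‖Bₙv‖² ≥ Λ(1 − R(1 − λ/Λ))‖v‖²`,
and the constant `Λ(1 − R(1 − λ/Λ))` is strictly positive. -/
theorem perturbed_family_uniformly_coercive
    {V : Type*} [NormedAddCommGroup V] [InnerProductSpace ℂ V]
    {H : Type*} [NormedAddCommGroup H] [InnerProductSpace ℂ H]
    (a : V → V → ℂ) (B : ℕ → V →L[ℂ] H) (lam Lam r R : ℝ)
    (hlam : 0 < lam) (hLam : 0 < Lam)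
    (hr0 : 0 < r) (hr1 : r < 1) (hR1 : 1 < R)
    (hRrho : R * (1 - lam / Lam) < 1)
    (F : ℂ → ℂ) (hF : ∀ z : ℂ, F z = (r : ℂ) * Complex.exp (z * (Real.log (R / r) : ℂ)))
    (hBsum : ∀ v : V, Summable fun n : ℕ => ‖B n v‖ ^ 2)
    (ha_add₁ : ∀ u u' v : V, a (u + u') v = a u v + a u' v)
    (ha_smul₁ : ∀ (s : ℂ) (u v : V), a (s • u) v = s * a u v)
    (ha_add₂ : ∀ u v v' : V, a u (v + v') = a u v + a u v')
    (ha_smul₂ : ∀ (s : ℂ) (u v : V), a u (s • v) = starRingEnd ℂ s * a u v)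
    (ha_herm : ∀ u v : V, a u v = starRingEnd ℂ (a v u))
    (hbdd : ∀ u v : V, ‖a u v‖ ≤ Lam * ‖u‖ * ‖v‖)
    (hcoer : ∀ v : V,
      lam * ‖v‖ ^ 2 ≤ (a v v).re - (1 / 2) * ∑' n : ℕ, ‖B n v‖ ^ 2) :
    0 < Lam * (1 - R * (1 - lam / Lam)) ∧
      ∀ z : ℂ, 0 ≤ z.re → z.re ≤ 1 → ∀ v : V,
        Lam * (1 - R * (1 - lam / Lam)) * ‖v‖ ^ 2 ≤
          (F z * (a v v - ((Lam * ‖v‖ ^ 2 : ℝ) : ℂ)) + ((Lam * ‖v‖ ^ 2 : ℝ) : ℂ)).re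
            - (‖F z‖ / 2) * ∑' n : ℕ, ‖B n v‖ ^ 2 :=
  perturbed_family_uniformly_coercive_general a B lam Lam r R hLam hr0 hr1 hR1 hRrho F hF ha_herm
    hbdd hcoer
end

section
/- Let N ≥ 1 be an integer, q > 2 a real number, and C ≥ 0. Then there exists a constant C' ≥ 0 depending only on q, C and N such that for every integer m ≥ 1, every function φ : ℝ^N → ℝ^N satisfying φ^α(y)·y^α ≤ C·(|y|² + 1) for all y ∈ ℝ^N and all α ∈ {1,…,N}, and every v ∈ ℝ^N, one has ∑_{α=1}^N ψ_m'(v^α)·φ^α(v) ≤ C'·(1 + ∑_{β=1}^N ψ_m(v^β)). -/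
/-!
Write `ψ_m'(ξ) = w(ξ) ξ`. With `ρ(ξ) = min(|ξ|, m)` one has `0 ≤ w(ξ) ≤ q(q-1) ρ(ξ)^(q-2)`
and `ρ(η)^(q-2) η² ≤ ψ_m(η)`, so comparing `ρ(ξ)` with `ρ(η)` gives the pairwise bound
`w(ξ) η² ≤ q(q-1) (ψ_m(ξ) + ψ_m(η))`. As `w ≥ 0`, dissipativity bounds `ψ_m'(v^α) φ^α(v)`
by `C w(v^α) (∑_β (v^β)² + 1)`; the pairwise bound, also at `η = 1` where `ψ_m(1) = 1`, then
sums to the claim with `C' = C q(q-1)(2N+1)`.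
-/

/-- The auxiliary function `ψ_m` from Lemma `lem:p-approx`: `ψ_m(ξ) = |ξ|^q` for
`|ξ| ≤ m`, and the quadratic extension
`m^{q-2} (q(q-1)/2·ξ² − q(q-2)·m·|ξ| + (q-1)(q-2)/2·m²)` for `|ξ| > m`. -/
noncomputable def psiAux (q : ℝ) (m : ℕ) (ξ : ℝ) : ℝ :=
  if |ξ| ≤ (m : ℝ) then |ξ| ^ q
  else (m : ℝ) ^ (q - 2) *
    (q * (q - 1) / 2 * ξ ^ 2 - q * (q - 2) * (m : ℝ) * |ξ|
      + (q - 1) * (q - 2) / 2 * (m : ℝ) ^ 2)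

noncomputable def psiQuad (q : ℝ) (m : ℕ) (t : ℝ) : ℝ :=
  (m : ℝ) ^ (q - 2) *
    (q * (q - 1) / 2 * t ^ 2 - q * (q - 2) * (m : ℝ) * t
      + (q - 1) * (q - 2) / 2 * (m : ℝ) ^ 2)

/-- The factor `w` in `ψ_m'(ξ) = w(ξ) ξ` (see `hasDerivAt_psiAux`). -/
noncomputable def psiAuxWeight (q : ℝ) (m : ℕ) (ξ : ℝ) : ℝ :=
  if |ξ| ≤ (m : ℝ) then q * |ξ| ^ (q - 2)
  else (m : ℝ) ^ (q - 2) * (q * (q - 1) - q * (q - 2) * (m : ℝ) / |ξ|)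

section

variable {q : ℝ} {m : ℕ}

theorem psiAux_of_abs_le {ξ : ℝ} (h : |ξ| ≤ m) : psiAux q m ξ = |ξ| ^ q := if_pos h

theorem rpow_sub_two_mul_sq {x : ℝ} (hx : 0 ≤ x) (hq : q ≠ 0) :
    x ^ (q - 2) * x ^ 2 = x ^ q := by
  rw [← Real.rpow_natCast x 2, ← Real.rpow_add' hx (by simpa using hq)]
  norm_num

theorem psiQuad_self (hq : q ≠ 0) : psiQuad q m m = (m : ℝ) ^ q := by
  rw [← rpow_sub_two_mul_sq (Nat.cast_nonneg m) hq, psiQuad]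
  ring

theorem psiAux_of_le_abs (hq : q ≠ 0) {ξ : ℝ} (h : m ≤ |ξ|) :
    psiAux q m ξ = psiQuad q m |ξ| := by
  rcases h.lt_or_eq with h | h
  · rw [psiAux, if_neg h.not_ge, psiQuad, sq_abs]
  · rw [psiAux_of_abs_le h.ge, ← h, psiQuad_self hq]

theorem hasDerivAt_psiQuad_abs {ξ : ℝ} (hξ : ξ ≠ 0) :
    HasDerivAt (fun x => psiQuad q m |x|)
      ((m : ℝ) ^ (q - 2) * (q * (q - 1) - q * (q - 2) * m / |ξ|) * ξ) ξ := by
  have hQ : HasDerivAt (psiQuad q m)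
      ((m : ℝ) ^ (q - 2) * (q * (q - 1) * |ξ| - q * (q - 2) * m)) |ξ| := by
    have := ((((hasDerivAt_pow 2 |ξ|).const_mul (q * (q - 1) / 2)).sub
      ((hasDerivAt_id |ξ|).const_mul (q * (q - 2) * m))).add_const
      ((q - 1) * (q - 2) / 2 * (m : ℝ) ^ 2)).const_mul ((m : ℝ) ^ (q - 2))
    exact this.congr_deriv (by push_cast; ring)
  refine (hQ.comp ξ (hasDerivAt_abs hξ)).congr_deriv ?_
  rcases hξ.lt_or_gt with h | h
  · rw [abs_of_neg h, sign_neg h, SignType.coe_neg_one]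
    field_simp
    ring
  · rw [abs_of_pos h, sign_pos h, SignType.coe_one]
    field_simp

theorem hasDerivAt_psiAux (hq : 1 < q) (hm : 0 < m) (ξ : ℝ) :
    HasDerivAt (psiAux q m) (psiAuxWeight q m ξ * ξ) ξ := by
  have hq0 : q ≠ 0 := by positivity
  have hInner := hasDerivAt_abs_rpow ξ hq
  rcases lt_trichotomy |ξ| m with hlt | heq | hgt
  · rw [psiAuxWeight, if_pos hlt.le]
    refine hInner.congr_of_eventuallyEq ?_
    filter_upwards [(isOpen_lt continuous_abs continuous_const).mem_nhds hlt] with x hx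
    exact psiAux_of_abs_le hx.le
  · have hξ : ξ ≠ 0 := abs_pos.1 (by rw [heq]; exact_mod_cast hm)
    have hIn : HasDerivWithinAt (psiAux q m) (psiAuxWeight q m ξ * ξ) {x | |x| ≤ m} ξ := by
      rw [psiAuxWeight, if_pos heq.le]
      exact hInner.hasDerivWithinAt.congr (fun x hx => psiAux_of_abs_le hx)
        (psiAux_of_abs_le heq.le)
    have hOut : HasDerivWithinAt (psiAux q m) (psiAuxWeight q m ξ * ξ) {x | m ≤ |x|} ξ := by
      have hm0 : (m : ℝ) ≠ 0 := by positivity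
      have hWeight : psiAuxWeight q m ξ =
          (m : ℝ) ^ (q - 2) * (q * (q - 1) - q * (q - 2) * m / |ξ|) := by
        rw [psiAuxWeight, if_pos heq.le, heq]
        field_simp
        ring
      rw [hWeight]
      exact (hasDerivAt_psiQuad_abs hξ).hasDerivWithinAt.congr
        (fun x hx => psiAux_of_le_abs hq0 hx) (psiAux_of_le_abs hq0 heq.ge)
    have hCover : {x : ℝ | |x| ≤ m} ∪ {x | m ≤ |x|} = Set.univ :=
      Set.eq_univ_of_forall fun x => le_total |x| m
    rw [← hasDerivWithinAt_univ, ← hCover]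
    exact hIn.union hOut
  · rw [psiAuxWeight, if_neg hgt.not_ge]
    have hξ : ξ ≠ 0 := abs_pos.1 (m.cast_nonneg.trans_lt hgt)
    refine (hasDerivAt_psiQuad_abs hξ).congr_of_eventuallyEq ?_
    filter_upwards [(isOpen_lt continuous_const continuous_abs).mem_nhds hgt] with x hx
    exact psiAux_of_le_abs hq0 hx.le

theorem min_abs_rpow_mul_sq_le_psiAux (hq : 2 ≤ q) (ξ : ℝ) :
    min |ξ| m ^ (q - 2) * ξ ^ 2 ≤ psiAux q m ξ := by
  have hq0 : q ≠ 0 := by positivity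
  rcases le_total |ξ| m with h | h
  · rw [min_eq_left h, psiAux_of_abs_le h, ← sq_abs, rpow_sub_two_mul_sq (abs_nonneg ξ) hq0]
  · rw [min_eq_right h, psiAux_of_le_abs hq0 h, psiQuad, ← sq_abs]
    gcongr
    -- the bracket in `psiQuad q m t` minus `t²` is `(q - 2)/2 * (t - m) * ((q + 1) t - (q - 1) m)`
    nlinarith [mul_nonneg (mul_nonneg (sub_nonneg.2 hq) (sub_nonneg.2 h))
      (show 0 ≤ (q + 1) * |ξ| - (q - 1) * m by nlinarith [Nat.cast_nonneg (α := ℝ) m])]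

theorem psiAux_nonneg (hq : 2 ≤ q) (ξ : ℝ) : 0 ≤ psiAux q m ξ :=
  (mul_nonneg (Real.rpow_nonneg (le_min (abs_nonneg ξ) m.cast_nonneg) _) (sq_nonneg ξ)).trans
    (min_abs_rpow_mul_sq_le_psiAux hq ξ)

theorem psiAux_one (hm : 1 ≤ m) : psiAux q m 1 = 1 := by
  rw [psiAux_of_abs_le (by simpa using hm), abs_one, Real.one_rpow]

theorem min_abs_rpow_mul_sq_le_psiAux_add (hq : 2 ≤ q) (ξ η : ℝ) :
    min |ξ| m ^ (q - 2) * η ^ 2 ≤ psiAux q m ξ + psiAux q m η := by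
  have hρ : ∀ x : ℝ, 0 ≤ min |x| m := fun x => le_min (abs_nonneg x) m.cast_nonneg
  rcases le_or_gt (min |ξ| m) (min |η| m) with h | h
  · calc min |ξ| m ^ (q - 2) * η ^ 2 ≤ min |η| m ^ (q - 2) * η ^ 2 := by gcongr
      _ ≤ psiAux q m η := min_abs_rpow_mul_sq_le_psiAux hq η
      _ ≤ psiAux q m ξ + psiAux q m η := le_add_of_nonneg_left (psiAux_nonneg hq ξ)
  · have hηξ : |η| ≤ |ξ| := by
      rcases min_lt_iff.1 h with h' | h'
      · exact h'.le.trans (min_le_left _ _)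
      · exact absurd h' (min_le_right _ _).not_gt
    calc min |ξ| m ^ (q - 2) * η ^ 2 ≤ min |ξ| m ^ (q - 2) * ξ ^ 2 :=
          mul_le_mul_of_nonneg_left (sq_le_sq.2 hηξ) (Real.rpow_nonneg (hρ ξ) _)
      _ ≤ psiAux q m ξ := min_abs_rpow_mul_sq_le_psiAux hq ξ
      _ ≤ psiAux q m ξ + psiAux q m η := le_add_of_nonneg_right (psiAux_nonneg hq η)

theorem psiAuxWeight_nonneg (hq : 2 ≤ q) (ξ : ℝ) : 0 ≤ psiAuxWeight q m ξ := by
  unfold psiAuxWeight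
  split_ifs with h
  · positivity
  · have hξ : (m : ℝ) < |ξ| := not_le.1 h
    have hm : (m : ℝ) / |ξ| ≤ 1 := (div_le_one (m.cast_nonneg.trans_lt hξ)).2 hξ.le
    have : q * (q - 2) * (m / |ξ|) ≤ q * (q - 1) := by
      nlinarith [mul_le_mul_of_nonneg_left hm (by nlinarith : 0 ≤ q * (q - 2))]
    rw [mul_div_assoc]
    exact mul_nonneg (by positivity) (by linarith)

theorem psiAuxWeight_le (hq : 2 ≤ q) (ξ : ℝ) :
    psiAuxWeight q m ξ ≤ q * (q - 1) * min |ξ| m ^ (q - 2) := by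
  unfold psiAuxWeight
  split_ifs with h
  · rw [min_eq_left h]
    gcongr
    nlinarith
  · rw [min_eq_right (not_le.1 h).le, mul_comm]
    have : 0 ≤ q * (q - 2) * m / |ξ| := by
      have := sub_nonneg.2 hq
      positivity
    gcongr
    linarith

theorem psiAuxWeight_mul_sq_le (hq : 2 ≤ q) (ξ η : ℝ) :
    psiAuxWeight q m ξ * η ^ 2 ≤ q * (q - 1) * (psiAux q m ξ + psiAux q m η) :=
  calc psiAuxWeight q m ξ * η ^ 2 ≤ q * (q - 1) * min |ξ| m ^ (q - 2) * η ^ 2 := by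
        gcongr
        exact psiAuxWeight_le hq ξ
    _ ≤ q * (q - 1) * (psiAux q m ξ + psiAux q m η) := by
        rw [mul_assoc]
        gcongr
        · nlinarith
        · exact min_abs_rpow_mul_sq_le_psiAux_add hq ξ η

end

theorem sum_mul_norm_sq_add_one_le {ι : Type*} [Fintype ι] {w ψ : ℝ → ℝ} {K : ℝ}
    (hK : 0 ≤ K) (hwψ : ∀ ξ η, w ξ * η ^ 2 ≤ K * (ψ ξ + ψ η)) (hψ1 : ψ 1 ≤ 1)
    (v : EuclideanSpace ℝ ι) :
    ∑ α, w (v α) * (‖v‖ ^ 2 + 1) ≤ K * (2 * Fintype.card ι + 1) * (1 + ∑ β, ψ (v β)) := by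
  set n : ℝ := (Fintype.card ι : ℝ)
  set S := ∑ β, ψ (v β)
  have hsq (α : ι) : ∑ β, w (v α) * v β ^ 2 ≤ K * (n * ψ (v α) + S) :=
    calc ∑ β, w (v α) * v β ^ 2 ≤ ∑ β, K * (ψ (v α) + ψ (v β)) :=
          Finset.sum_le_sum fun β _ => hwψ _ _
      _ = K * (n * ψ (v α) + S) := by
          rw [← Finset.mul_sum, Finset.sum_add_distrib, Finset.sum_const, nsmul_eq_mul,
            Finset.card_univ]
  have hone (α : ι) : w (v α) ≤ K * (ψ (v α) + 1) := by
    simpa using (hwψ (v α) 1).trans (by gcongr)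
  calc ∑ α, w (v α) * (‖v‖ ^ 2 + 1) = ∑ α, (∑ β, w (v α) * v β ^ 2 + w (v α)) := by
        simp only [EuclideanSpace.real_norm_sq_eq, mul_add, mul_one, Finset.mul_sum]
    _ ≤ ∑ α, (K * (n * ψ (v α) + S) + K * (ψ (v α) + 1)) :=
        Finset.sum_le_sum fun α _ => add_le_add (hsq α) (hone α)
    _ = K * ((2 * n + 1) * S + n) := by
        simp only [Finset.sum_add_distrib, ← Finset.mul_sum, Finset.sum_const, nsmul_eq_mul,
          Finset.card_univ, mul_one]
        ring
    _ ≤ K * (2 * n + 1) * (1 + S) := by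
        nlinarith [mul_nonneg hK (Nat.cast_nonneg (α := ℝ) (Fintype.card ι))]

theorem psiAux_dissipativity_bound_general (N : ℕ) (q C : ℝ)
    (hq : 2 < q) (hC : 0 ≤ C) :
    ∃ C' : ℝ, 0 ≤ C' ∧
      ∀ (m : ℕ), 1 ≤ m →
        ∀ φ : EuclideanSpace ℝ (Fin N) → EuclideanSpace ℝ (Fin N),
          (∀ (y : EuclideanSpace ℝ (Fin N)) (α : Fin N),
            φ y α * y α ≤ C * (‖y‖ ^ 2 + 1)) →
          ∀ v : EuclideanSpace ℝ (Fin N),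
            ∑ α : Fin N, deriv (psiAux q m) (v α) * φ v α
              ≤ C' * (1 + ∑ β : Fin N, psiAux q m (v β)) := by
  have hK : 0 ≤ q * (q - 1) := by nlinarith
  refine ⟨C * (q * (q - 1) * (2 * N + 1)), by positivity, fun m hm φ hφ v => ?_⟩
  calc ∑ α, deriv (psiAux q m) (v α) * φ v α
      = ∑ α, psiAuxWeight q m (v α) * (φ v α * v α) := by
        refine Finset.sum_congr rfl fun α _ => ?_
        rw [(hasDerivAt_psiAux (one_lt_two.trans hq) hm _).deriv]
        ring
    _ ≤ ∑ α, psiAuxWeight q m (v α) * (C * (‖v‖ ^ 2 + 1)) :=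
        Finset.sum_le_sum fun α _ =>
          mul_le_mul_of_nonneg_left (hφ v α) (psiAuxWeight_nonneg hq.le _)
    _ = C * ∑ α, psiAuxWeight q m (v α) * (‖v‖ ^ 2 + 1) := by
        rw [Finset.mul_sum]
        exact Finset.sum_congr rfl fun α _ => by ring
    _ ≤ C * (q * (q - 1) * (2 * N + 1) * (1 + ∑ β, psiAux q m (v β))) := by
        gcongr
        simpa using sum_mul_norm_sq_add_one_le hK (psiAuxWeight_mul_sq_le hq.le)
          (psiAux_one hm).le v
    _ = _ := by ring

/-- Let `N ≥ 1`, `q > 2`, `C ≥ 0`. There is a constant `C' ≥ 0`,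
depending only on `q`, `C` and `N`, such that for every `m ≥ 1`, every
`φ : ℝ^N → ℝ^N` satisfying the dissipativity condition
`φ^α(y)·y^α ≤ C(|y|² + 1)` for all `y` and `α`, and every `v ∈ ℝ^N`, one has
`∑_α ψ_m'(v^α)·φ^α(v) ≤ C'·(1 + ∑_β ψ_m(v^β))`. -/
theorem psiAux_dissipativity_bound (N : ℕ) (hN : 1 ≤ N) (q C : ℝ)
    (hq : 2 < q) (hC : 0 ≤ C) :
    ∃ C' : ℝ, 0 ≤ C' ∧
      ∀ (m : ℕ), 1 ≤ m →
        ∀ φ : EuclideanSpace ℝ (Fin N) → EuclideanSpace ℝ (Fin N),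
          (∀ (y : EuclideanSpace ℝ (Fin N)) (α : Fin N),
            φ y α * y α ≤ C * (‖y‖ ^ 2 + 1)) →
          ∀ v : EuclideanSpace ℝ (Fin N),
            ∑ α : Fin N, deriv (psiAux q m) (v α) * φ v α
              ≤ C' * (1 + ∑ β : Fin N, psiAux q m (v β)) :=
  psiAux_dissipativity_bound_general N q C hq hC
end

section
/- Assume: (symmetry) a^{αβ}_{ij} = a^{βα}_{ji} for all indices; (boundedness) |a^{αβ}_{ij}(y)| ≤ Λ for all y ∈ ℝ^N and all indices, and ∑_{n,γ,j} (b^{γβ}_{n,j}(s))² ≤ Λ² for all s ∈ ℝ and all β; (coercivity) for all y ∈ ℝ^N and all ξ ∈ ℝ^{N×d}: ∑_{α,β,i,j} a^{αβ}_{ij}(y)·ξ_i^α·ξ_j^β − (1/2)·∑_{n,γ} ( ∑_{β,j} b^{γβ}_{n,j}(y^β)·ξ_j^β )² ≥ λ·|ξ|². Then the mollified coefficients satisfy the same conditions with the same constants: ã^{αβ}_{ij} = ã^{βα}_{ji}; |ã^{αβ}_{ij}(y)| ≤ Λ for all y; ∑_{n,γ,j} (b̃^{γβ}_{n,j}(s))²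 ≤ Λ² for all s and β; and for all y ∈ ℝ^N and ξ ∈ ℝ^{N×d}: ∑_{α,β,i,j} ã^{αβ}_{ij}(y)·ξ_i^α·ξ_j^β − (1/2)·∑_{n,γ} ( ∑_{β,j} b̃^{γβ}_{n,j}(y^β)·ξ_j^β )² ≥ λ·|ξ|². -/
open MeasureTheory

/-- Jensen's inequality for the square function with respect to a probability density. -/
lemma moll_jensen_sq {α : Type*} [MeasurableSpace α] (μ : Measure α) (f g : α → ℝ)
    (hg : Integrable g μ) (hg0 : ∀ x, 0 ≤ g x) (hg1 : ∫ x, g x ∂μ = 1)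
    (hfg : Integrable (fun x => f x * g x) μ)
    (hf2g : Integrable (fun x => f x ^ 2 * g x) μ) :
    (∫ x, f x * g x ∂μ) ^ 2 ≤ ∫ x, f x ^ 2 * g x ∂μ := by
  set c := ∫ x, f x * g x ∂μ with hc
  have hI1 : Integrable (fun x => f x ^ 2 * g x - 2 * c * (f x * g x)) μ :=
    hf2g.sub (hfg.const_mul _)
  have hI2 : Integrable (fun x => c ^ 2 * g x) μ := hg.const_mul _
  have h0 : 0 ≤ ∫ x, (f x - c) ^ 2 * g x ∂μ :=
    integral_nonneg fun x => mul_nonneg (sq_nonneg _) (hg0 x)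
  have e1 : ∫ x, (f x - c) ^ 2 * g x ∂μ
      = ∫ x, ((f x ^ 2 * g x - 2 * c * (f x * g x)) + c ^ 2 * g x) ∂μ := by
    congr 1; funext x; ring
  rw [e1, integral_add hI1 hI2, integral_sub hf2g (hfg.const_mul _),
    integral_const_mul, integral_const_mul, hg1, ← hc] at h0
  nlinarith [h0]

/-- A product of integrable functions of the coordinates is integrable on Euclidean space. -/
lemma moll_euclid_prod_integrable {N : ℕ} (h : Fin N → ℝ → ℝ) (hint : ∀ β, Integrable (h β)) :
    Integrable (fun z : EuclideanSpace ℝ (Fin N) => ∏ β, h β (z β)) := by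
  have mp := (EuclideanSpace.volume_preserving_symm_measurableEquiv_toLp (Fin N)).symm
  exact (mp.integrable_comp_emb (MeasurableEquiv.measurableEmbedding _)
    (g := fun z : EuclideanSpace ℝ (Fin N) => ∏ β, h β (z β))).mp
    (Integrable.fintype_prod (f := h) hint)

/-- Fubini on Euclidean space for products of functions of the coordinates. -/
lemma moll_euclid_prod_integral {N : ℕ} (h : Fin N → ℝ → ℝ) :
    ∫ z : EuclideanSpace ℝ (Fin N), ∏ β, h β (z β) = ∏ β, ∫ t, h β t := by
  have mp := (EuclideanSpace.volume_preserving_symm_measurableEquiv_toLp (Fin N)).symm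
  rw [← mp.integral_comp' (fun z : EuclideanSpace ℝ (Fin N) => ∏ β, h β (z β))]
  exact integral_fintype_prod_eq_prod (ι := Fin N) (fun β t => h β t)

/-- Pull a finite sum out of an integral. -/
lemma moll_sum_integral {ι : Type*} [Fintype ι] {α : Type*} [MeasurableSpace α] {μ : Measure α}
    (F : ι → α → ℝ) (h : ∀ i, Integrable (F i) μ) :
    ∑ i, ∫ x, F i x ∂μ = ∫ x, ∑ i, F i x ∂μ :=
  (integral_finset_sum _ fun i _ => h i).symm

/-- Mollification preserves symmetry, boundedness and coercivity of
the coefficients, with the same constants.  Here `ã^{αβ}_{ij}(y) = ∫ a^{αβ}_{ij}(z) ρ(y−z) dz`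
and `b̃^{γβ}_{n,j}(s) = ∫ b^{γβ}_{n,j}(σ) ζ(s−σ) dσ`, where `ζ` is a smooth compactly
supported probability density on `ℝ` and `ρ(y) = ∏_β ζ(y^β)`. -/
theorem mollified_coefficients_coercive
    (d N : ℕ) (hd : 1 ≤ d) (hN : 1 ≤ N) (lam Lam : ℝ)
    (hlam : 0 < lam) (hLam : 0 < Lam)
    (a : Fin N → Fin N → Fin d → Fin d → EuclideanSpace ℝ (Fin N) → ℝ)
    (b : ℕ → Fin N → Fin N → Fin d → ℝ → ℝ)
    (ζ : ℝ → ℝ) (hζ_smooth : ContDiff ℝ (⊤ : ℕ∞) ζ) (hζ_supp : HasCompactSupport ζ)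
    (hζ_nonneg : ∀ s : ℝ, 0 ≤ ζ s) (hζ_int : ∫ s : ℝ, ζ s = 1)
    (ρ : EuclideanSpace ℝ (Fin N) → ℝ)
    (hρ : ∀ y : EuclideanSpace ℝ (Fin N), ρ y = ∏ β : Fin N, ζ (y β))
    (ha_meas : ∀ α β i j, Measurable (a α β i j))
    (hb_meas : ∀ n γ β j, Measurable (b n γ β j))
    (ha_symm : ∀ α β i j, a α β i j = a β α j i)
    (ha_bdd : ∀ α β i j y, |a α β i j y| ≤ Lam)
    (hb_sum : ∀ (β : Fin N) (s : ℝ),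
      Summable fun p : ℕ × Fin N × Fin d => (b p.1 p.2.1 β p.2.2 s) ^ 2)
    (hb_bdd : ∀ (β : Fin N) (s : ℝ),
      ∑' p : ℕ × Fin N × Fin d, (b p.1 p.2.1 β p.2.2 s) ^ 2 ≤ Lam ^ 2)
    (hcoer : ∀ (y : EuclideanSpace ℝ (Fin N)) (ξ : Fin N → Fin d → ℝ),
      lam * (∑ β : Fin N, ∑ j : Fin d, (ξ β j) ^ 2) ≤
        (∑ α : Fin N, ∑ β : Fin N, ∑ i : Fin d, ∑ j : Fin d,
            a α β i j y * ξ α i * ξ β j)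
          - (1 / 2) * ∑' p : ℕ × Fin N,
              (∑ β : Fin N, ∑ j : Fin d, b p.1 p.2 β j (y β) * ξ β j) ^ 2)
    (atil : Fin N → Fin N → Fin d → Fin d → EuclideanSpace ℝ (Fin N) → ℝ)
    (hatil : ∀ α β i j y, atil α β i j y = ∫ z, a α β i j z * ρ (y - z))
    (btil : ℕ → Fin N → Fin N → Fin d → ℝ → ℝ)
    (hbtil : ∀ n γ β j s, btil n γ β j s = ∫ σ : ℝ, b n γ β j σ * ζ (s - σ)) :
    (∀ α β i j, atil α β i j = atil β α j i) ∧
    (∀ α β i j y, |atil α β i j y| ≤ Lam) ∧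
    (∀ (β : Fin N) (s : ℝ),
      (Summable fun p : ℕ × Fin N × Fin d => (btil p.1 p.2.1 β p.2.2 s) ^ 2) ∧
        ∑' p : ℕ × Fin N × Fin d, (btil p.1 p.2.1 β p.2.2 s) ^ 2 ≤ Lam ^ 2) ∧
    (∀ (y : EuclideanSpace ℝ (Fin N)) (ξ : Fin N → Fin d → ℝ),
      lam * (∑ β : Fin N, ∑ j : Fin d, (ξ β j) ^ 2) ≤
        (∑ α : Fin N, ∑ β : Fin N, ∑ i : Fin d, ∑ j : Fin d,
            atil α β i j y * ξ α i * ξ β j)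
          - (1 / 2) * ∑' p : ℕ × Fin N,
              (∑ β : Fin N, ∑ j : Fin d, btil p.1 p.2 β j (y β) * ξ β j) ^ 2) := by
  classical
  have hζc : Continuous ζ := hζ_smooth.continuous
  have hgs_int : ∀ s : ℝ, Integrable (fun σ => ζ (s - σ)) := fun s =>
    ((hζc.comp (continuous_const.sub continuous_id)).integrable_of_hasCompactSupport
      (hζ_supp.comp_homeomorph (Homeomorph.subLeft s)))
  have hgs1 : ∀ s : ℝ, (∫ σ, ζ (s - σ)) = 1 := fun s => by
    rw [integral_sub_left_eq_self ζ volume s]; exact hζ_int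
  have hbabs : ∀ n γ β j s, |b n γ β j s| ≤ Lam := by
    intro n γ β j s
    have h1 : b n γ β j s ^ 2 ≤ Lam ^ 2 :=
      le_trans (Summable.le_tsum (hb_sum β s) (n, γ, j) fun _ _ => sq_nonneg _) (hb_bdd β s)
    nlinarith [abs_nonneg (b n γ β j s), sq_abs (b n γ β j s)]
  have hbd1 : ∀ (f : ℝ → ℝ) (C : ℝ), Measurable f → (∀ t, |f t| ≤ C) → ∀ s : ℝ,
      Integrable (fun σ => f σ * ζ (s - σ)) := fun f C hm hb s =>
    (hgs_int s).bdd_mul (c := C) hm.aestronglyMeasurable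
      (Filter.Eventually.of_forall fun t => by rw [Real.norm_eq_abs]; exact hb t)
  -- facts about the mollifier ρ
  have hρy : ∀ (y z : EuclideanSpace ℝ (Fin N)), ρ (y - z) = ∏ β, ζ (y β - z β) := by
    intro y z; rw [hρ]; exact Finset.prod_congr rfl fun β _ => by simp
  have hρfun : ∀ y : EuclideanSpace ℝ (Fin N), (fun z : EuclideanSpace ℝ (Fin N) => ρ (y - z))
      = fun z => ∏ β, (fun t => ζ (y β - t)) (z β) := fun y => funext fun z => hρy y z
  have hρint : ∀ y, Integrable (fun z : EuclideanSpace ℝ (Fin N) => ρ (y - z)) := by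
    intro y
    rw [hρfun y]
    exact moll_euclid_prod_integrable _ fun β => hgs_int (y β)
  have hρ1 : ∀ y, (∫ z, ρ (y - z)) = 1 := by
    intro y
    have e : (∫ z : EuclideanSpace ℝ (Fin N), ρ (y - z)) = ∏ β, ∫ t, ζ (y β - t) := by
      rw [hρfun y]
      exact moll_euclid_prod_integral (fun β t => ζ (y β - t))
    rw [e]
    exact Finset.prod_eq_one fun β _ => hgs1 (y β)
  have hρ0 : ∀ y z, 0 ≤ ρ (y - z) := fun y z => by
    rw [hρ]; exact Finset.prod_nonneg fun β _ => hζ_nonneg _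
  have hbdE : ∀ (f : EuclideanSpace ℝ (Fin N) → ℝ) (C : ℝ), AEStronglyMeasurable f volume →
      (∀ t, |f t| ≤ C) → ∀ y, Integrable (fun z => f z * ρ (y - z)) := fun f C hm hb y =>
    (hρint y).bdd_mul (c := C) hm (Filter.Eventually.of_forall fun t => by rw [Real.norm_eq_abs]; exact hb t)
  -- the coordinate integral identity
  have hcoord : ∀ (f : ℝ → ℝ) (y : EuclideanSpace ℝ (Fin N)) (β : Fin N),
      (∫ z, f (z β) * ρ (y - z)) = ∫ σ, f σ * ζ (y β - σ) := by
    intro f y β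
    have h1 : (fun z : EuclideanSpace ℝ (Fin N) => f (z β) * ρ (y - z))
        = fun z => ∏ β', (fun t => (if β' = β then f t else 1) * ζ (y β' - t)) (z β') := by
      funext z
      rw [hρy y z, Finset.prod_mul_distrib]
      congr 1
      simp
    have e : (∫ z : EuclideanSpace ℝ (Fin N),
        ∏ β', (fun t => (if β' = β then f t else 1) * ζ (y β' - t)) (z β'))
        = ∏ β', ∫ t, (if β' = β then f t else 1) * ζ (y β' - t) :=
      moll_euclid_prod_integral (fun β' t => (if β' = β then f t else 1) * ζ (y β' - t))
    rw [h1, e]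
    rw [Finset.prod_eq_single β]
    · simp
    · intro b' _ hb'
      simp only [if_neg hb', one_mul]
      exact hgs1 (y b')
    · intro h; exact absurd (Finset.mem_univ β) h
  -- Part 1 : symmetry
  have part1 : ∀ α β i j, atil α β i j = atil β α j i := by
    intro α β i j; funext y
    rw [hatil, hatil, ha_symm α β i j]
  -- Part 2 : boundedness of atil
  have part2 : ∀ α β i j y, |atil α β i j y| ≤ Lam := by
    intro α β i j y
    rw [hatil]
    have hb : ∀ z, ‖a α β i j z * ρ (y - z)‖ ≤ Lam * ρ (y - z) := fun z => by
      rw [Real.norm_eq_abs, abs_mul, abs_of_nonneg (hρ0 y z)]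
      exact mul_le_mul_of_nonneg_right (ha_bdd α β i j z) (hρ0 y z)
    have h1 : ‖∫ z, a α β i j z * ρ (y - z)‖ ≤ ∫ z, Lam * ρ (y - z) :=
      norm_integral_le_of_norm_le ((hρint y).const_mul Lam) (Filter.Eventually.of_forall hb)
    rw [Real.norm_eq_abs] at h1
    calc |∫ z, a α β i j z * ρ (y - z)| ≤ ∫ z, Lam * ρ (y - z) := h1
      _ = Lam := by rw [integral_const_mul, hρ1 y, mul_one]
  -- Part 3 : boundedness of btil
  have part3 : ∀ (β : Fin N) (s : ℝ),
      (Summable fun p : ℕ × Fin N × Fin d => (btil p.1 p.2.1 β p.2.2 s) ^ 2) ∧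
        ∑' p : ℕ × Fin N × Fin d, (btil p.1 p.2.1 β p.2.2 s) ^ 2 ≤ Lam ^ 2 := by
    intro β s
    have hint1 : ∀ p : ℕ × Fin N × Fin d,
        Integrable (fun σ => b p.1 p.2.1 β p.2.2 σ * ζ (s - σ)) := fun p =>
      hbd1 _ Lam (hb_meas _ _ _ _) (fun t => hbabs _ _ _ _ t) s
    have hint2 : ∀ p : ℕ × Fin N × Fin d,
        Integrable (fun σ => b p.1 p.2.1 β p.2.2 σ ^ 2 * ζ (s - σ)) := fun p =>
      hbd1 _ (Lam ^ 2) ((hb_meas _ _ _ _).pow_const 2)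
        (fun t => by
          rw [abs_of_nonneg (sq_nonneg _), ← sq_abs]
          exact pow_le_pow_left₀ (abs_nonneg _) (hbabs _ _ _ _ t) 2) s
    have hJ : ∀ p : ℕ × Fin N × Fin d, (btil p.1 p.2.1 β p.2.2 s) ^ 2
        ≤ ∫ σ, b p.1 p.2.1 β p.2.2 σ ^ 2 * ζ (s - σ) := by
      intro p
      rw [hbtil]
      exact moll_jensen_sq volume _ _ (hgs_int s) (fun σ => hζ_nonneg _) (hgs1 s)
        (hint1 p) (hint2 p)
    have hU : ∀ u : Finset (ℕ × Fin N × Fin d),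
        ∑ p ∈ u, (btil p.1 p.2.1 β p.2.2 s) ^ 2 ≤ Lam ^ 2 := by
      intro u
      have e1 : ∑ p ∈ u, ∫ σ, b p.1 p.2.1 β p.2.2 σ ^ 2 * ζ (s - σ)
          = ∫ σ, ∑ p ∈ u, b p.1 p.2.1 β p.2.2 σ ^ 2 * ζ (s - σ) :=
        (integral_finset_sum u fun p _ => hint2 p).symm
      have e2 : (∫ σ, ∑ p ∈ u, b p.1 p.2.1 β p.2.2 σ ^ 2 * ζ (s - σ))
          ≤ ∫ σ, Lam ^ 2 * ζ (s - σ) := by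
        refine integral_mono (integrable_finset_sum u fun p _ => hint2 p)
          ((hgs_int s).const_mul _) fun σ => ?_
        rw [← Finset.sum_mul]
        refine mul_le_mul_of_nonneg_right ?_ (hζ_nonneg _)
        exact le_trans (Summable.sum_le_tsum u (fun _ _ => sq_nonneg _) (hb_sum β σ)) (hb_bdd β σ)
      calc ∑ p ∈ u, (btil p.1 p.2.1 β p.2.2 s) ^ 2
          ≤ ∑ p ∈ u, ∫ σ, b p.1 p.2.1 β p.2.2 σ ^ 2 * ζ (s - σ) :=
            Finset.sum_le_sum fun p _ => hJ p
        _ ≤ ∫ σ, Lam ^ 2 * ζ (s - σ) := e1 ▸ e2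
        _ = Lam ^ 2 := by rw [integral_const_mul, hgs1, mul_one]
    have hsumm := summable_of_sum_le (fun p => sq_nonneg _) hU
    exact ⟨hsumm, Summable.tsum_le_of_sum_le hsumm hU⟩
  refine ⟨part1, part2, part3, ?_⟩
  -- Part 4 : coercivity
  intro y ξ
  set Ξ := ∑ β : Fin N, ∑ j : Fin d, ξ β j ^ 2 with hΞ
  set q : EuclideanSpace ℝ (Fin N) → ℝ :=
    fun z => ∑ α, ∑ β, ∑ i, ∑ j, a α β i j z * ξ α i * ξ β j with hq
  set L : ℕ × Fin N → EuclideanSpace ℝ (Fin N) → ℝ :=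
    fun p z => ∑ β, ∑ j, b p.1 p.2 β j (z β) * ξ β j with hL
  set Cξ := ∑ β : Fin N, ∑ j : Fin d, |ξ β j| with hCξ
  have hLbd : ∀ p z, |L p z| ≤ Lam * Cξ := by
    intro p z
    calc |L p z| ≤ ∑ β, |∑ j, b p.1 p.2 β j (z β) * ξ β j| := Finset.abs_sum_le_sum_abs _ _
      _ ≤ ∑ β, ∑ j, |b p.1 p.2 β j (z β) * ξ β j| :=
          Finset.sum_le_sum fun β _ => Finset.abs_sum_le_sum_abs _ _
      _ ≤ ∑ β, ∑ j, Lam * |ξ β j| := by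
          refine Finset.sum_le_sum fun β _ => Finset.sum_le_sum fun j _ => ?_
          rw [abs_mul]
          exact mul_le_mul_of_nonneg_right (hbabs _ _ _ _ _) (abs_nonneg _)
      _ = Lam * Cξ := by rw [hCξ]; simp [Finset.mul_sum]
  have hLmeas : ∀ p, Measurable (L p) := fun p =>
    Finset.measurable_sum _ fun β _ =>
      Finset.measurable_sum _ fun j _ =>
        ((hb_meas p.1 p.2 β j).comp ((measurable_pi_apply β).comp (WithLp.measurable_ofLp 2 _))).mul_const _
  have hIL : ∀ p, Integrable (fun z => L p z * ρ (y - z)) :=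
    fun p => hbdE (L p) (Lam * Cξ) (hLmeas p).aestronglyMeasurable (hLbd p) y
  have hIL2 : ∀ p, Integrable (fun z => L p z ^ 2 * ρ (y - z)) :=
    fun p => hbdE _ ((Lam * Cξ) ^ 2) ((hLmeas p).pow_const 2).aestronglyMeasurable
      (fun z => by
        rw [abs_of_nonneg (sq_nonneg _), ← sq_abs]
        exact pow_le_pow_left₀ (abs_nonneg _) (hLbd p z) 2) y
  have hqmeas : Measurable q :=
    Finset.measurable_sum _ fun α _ => Finset.measurable_sum _ fun β _ =>
      Finset.measurable_sum _ fun i _ => Finset.measurable_sum _ fun j _ =>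
        ((ha_meas α β i j).mul_const _).mul_const _
  have hqbd : ∀ z, |q z| ≤ ∑ α, ∑ β, ∑ i : Fin d, ∑ j : Fin d, Lam * |ξ α i| * |ξ β j| := by
    intro z
    calc |q z| ≤ ∑ α, |∑ β, ∑ i, ∑ j, a α β i j z * ξ α i * ξ β j| :=
        Finset.abs_sum_le_sum_abs _ _
      _ ≤ ∑ α, ∑ β, |∑ i, ∑ j, a α β i j z * ξ α i * ξ β j| :=
        Finset.sum_le_sum fun α _ => Finset.abs_sum_le_sum_abs _ _
      _ ≤ ∑ α, ∑ β, ∑ i, |∑ j, a α β i j z * ξ α i * ξ β j| :=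
        Finset.sum_le_sum fun α _ => Finset.sum_le_sum fun β _ =>
          Finset.abs_sum_le_sum_abs _ _
      _ ≤ ∑ α, ∑ β, ∑ i, ∑ j, |a α β i j z * ξ α i * ξ β j| :=
        Finset.sum_le_sum fun α _ => Finset.sum_le_sum fun β _ =>
          Finset.sum_le_sum fun i _ => Finset.abs_sum_le_sum_abs _ _
      _ ≤ ∑ α, ∑ β, ∑ i, ∑ j, Lam * |ξ α i| * |ξ β j| := by
        refine Finset.sum_le_sum fun α _ => Finset.sum_le_sum fun β _ =>
          Finset.sum_le_sum fun i _ => Finset.sum_le_sum fun j _ => ?_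
        rw [abs_mul, abs_mul]
        exact mul_le_mul_of_nonneg_right
          (mul_le_mul_of_nonneg_right (ha_bdd α β i j z) (abs_nonneg _)) (abs_nonneg _)
  have hIq : Integrable (fun z => q z * ρ (y - z)) :=
    hbdE q _ hqmeas.aestronglyMeasurable hqbd y
  -- Step A
  have haint : ∀ α β i j, Integrable
      (fun z => a α β i j z * ξ α i * ξ β j * ρ (y - z)) := fun α β i j =>
    hbdE _ (Lam * |ξ α i| * |ξ β j|)
      (((ha_meas α β i j).mul_const _).mul_const _).aestronglyMeasurable
      (fun z => by
        rw [abs_mul, abs_mul]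
        exact mul_le_mul_of_nonneg_right
          (mul_le_mul_of_nonneg_right (ha_bdd α β i j z) (abs_nonneg _)) (abs_nonneg _)) y
  have hAeq : (∑ α, ∑ β, ∑ i, ∑ j, atil α β i j y * ξ α i * ξ β j)
      = ∫ z, q z * ρ (y - z) := by
    calc (∑ α, ∑ β, ∑ i, ∑ j, atil α β i j y * ξ α i * ξ β j)
        = ∑ α, ∑ β, ∑ i, ∑ j, ∫ z, a α β i j z * ξ α i * ξ β j * ρ (y - z) := by
          refine Finset.sum_congr rfl fun α _ => Finset.sum_congr rfl fun β _ =>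
            Finset.sum_congr rfl fun i _ => Finset.sum_congr rfl fun j _ => ?_
          rw [hatil, ← integral_mul_const, ← integral_mul_const]
          exact integral_congr_ae (Filter.Eventually.of_forall fun z => by ring)
      _ = ∑ α, ∑ β, ∑ i, ∫ z, ∑ j, a α β i j z * ξ α i * ξ β j * ρ (y - z) := by
          refine Finset.sum_congr rfl fun α _ => Finset.sum_congr rfl fun β _ =>
            Finset.sum_congr rfl fun i _ => ?_
          exact moll_sum_integral _ fun j => haint α β i j
      _ = ∑ α, ∑ β, ∫ z, ∑ i, ∑ j, a α β i j z * ξ α i * ξ β j * ρ (y - z) := by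
          refine Finset.sum_congr rfl fun α _ => Finset.sum_congr rfl fun β _ => ?_
          exact moll_sum_integral _ fun i => integrable_finset_sum _ fun j _ => haint α β i j
      _ = ∑ α, ∫ z, ∑ β, ∑ i, ∑ j, a α β i j z * ξ α i * ξ β j * ρ (y - z) := by
          refine Finset.sum_congr rfl fun α _ => ?_
          exact moll_sum_integral _ fun β => integrable_finset_sum _ fun i _ =>
            integrable_finset_sum _ fun j _ => haint α β i j
      _ = ∫ z, ∑ α, ∑ β, ∑ i, ∑ j, a α β i j z * ξ α i * ξ β j * ρ (y - z) :=
          moll_sum_integral _ fun α => integrable_finset_sum _ fun β _ =>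
            integrable_finset_sum _ fun i _ => integrable_finset_sum _ fun j _ => haint α β i j
      _ = ∫ z, q z * ρ (y - z) := by
          refine integral_congr_ae (Filter.Eventually.of_forall fun z => ?_)
          simp only [hq, Finset.sum_mul]
  -- Step B
  have hbint : ∀ (p : ℕ × Fin N) (β : Fin N) (j : Fin d),
      Integrable (fun z => b p.1 p.2 β j (z β) * ξ β j * ρ (y - z)) :=
    fun p β j => hbdE _ (Lam * |ξ β j|)
      (((hb_meas p.1 p.2 β j).comp ((measurable_pi_apply β).comp (WithLp.measurable_ofLp 2 _))).mul_const _).aestronglyMeasurable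
      (fun z => by
        rw [abs_mul]
        exact mul_le_mul_of_nonneg_right (hbabs _ _ _ _ _) (abs_nonneg _)) y
  have hBeq : ∀ p : ℕ × Fin N, (∑ β, ∑ j, btil p.1 p.2 β j (y β) * ξ β j)
      = ∫ z, L p z * ρ (y - z) := by
    intro p
    calc (∑ β, ∑ j, btil p.1 p.2 β j (y β) * ξ β j)
        = ∑ β, ∑ j, ∫ z, b p.1 p.2 β j (z β) * ξ β j * ρ (y - z) := by
          refine Finset.sum_congr rfl fun β _ => Finset.sum_congr rfl fun j _ => ?_
          rw [hbtil, ← hcoord (b p.1 p.2 β j) y β, ← integral_mul_const]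
          exact integral_congr_ae (Filter.Eventually.of_forall fun z => by ring)
      _ = ∑ β, ∫ z, ∑ j, b p.1 p.2 β j (z β) * ξ β j * ρ (y - z) :=
          Finset.sum_congr rfl fun β _ => moll_sum_integral _ fun j => hbint p β j
      _ = ∫ z, ∑ β, ∑ j, b p.1 p.2 β j (z β) * ξ β j * ρ (y - z) :=
          moll_sum_integral _ fun β => integrable_finset_sum _ fun j _ => hbint p β j
      _ = ∫ z, L p z * ρ (y - z) := by
          refine integral_congr_ae (Filter.Eventually.of_forall fun z => ?_)
          simp only [hL, Finset.sum_mul]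
  -- Step C : Jensen
  have hJen : ∀ p : ℕ × Fin N, (∑ β, ∑ j, btil p.1 p.2 β j (y β) * ξ β j) ^ 2
      ≤ ∫ z, L p z ^ 2 * ρ (y - z) := by
    intro p
    rw [hBeq p]
    exact moll_jensen_sq volume (L p) _ (hρint y) (hρ0 y) (hρ1 y) (hIL p) (hIL2 p)
  -- Step D : pointwise coercivity with finite sums
  have hLsummable : ∀ z, Summable (fun p : ℕ × Fin N => L p z ^ 2) := by
    intro z
    have hM : Summable (fun p : ℕ × Fin N =>
        ∑ β, ∑ j, b p.1 p.2 β j (z β) ^ 2 * ξ β j ^ 2) := by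
      refine summable_sum fun β _ => summable_sum fun j _ => ?_
      have hinj : Function.Injective
          (fun p : ℕ × Fin N => (p.1, p.2, j) : ℕ × Fin N → ℕ × Fin N × Fin d) := by
        intro p1 p2 h
        simp only [Prod.mk.injEq] at h
        exact Prod.ext h.1 h.2.1
      exact ((hb_sum β (z β)).comp_injective hinj).mul_right _
    refine Summable.of_nonneg_of_le (fun p => sq_nonneg _) (fun p => ?_)
      (hM.mul_left ((N : ℝ) * (d : ℝ)))
    have h1 : (∑ β, ∑ j, b p.1 p.2 β j (z β) * ξ β j) ^ 2
        ≤ (N : ℝ) * ∑ β, (∑ j, b p.1 p.2 β j (z β) * ξ β j) ^ 2 := by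
      have := sq_sum_le_card_mul_sum_sq (s := (Finset.univ : Finset (Fin N)))
        (f := fun β => ∑ j, b p.1 p.2 β j (z β) * ξ β j)
      simpa using this
    have h2 : ∀ β : Fin N, (∑ j, b p.1 p.2 β j (z β) * ξ β j) ^ 2
        ≤ (d : ℝ) * ∑ j, (b p.1 p.2 β j (z β) * ξ β j) ^ 2 := fun β => by
      have := sq_sum_le_card_mul_sum_sq (s := (Finset.univ : Finset (Fin d)))
        (f := fun j => b p.1 p.2 β j (z β) * ξ β j)
      simpa using this
    calc L p z ^ 2 ≤ (N : ℝ) * ∑ β, (∑ j, b p.1 p.2 β j (z β) * ξ β j) ^ 2 := h1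
      _ ≤ (N : ℝ) * ∑ β, ((d : ℝ) * ∑ j, (b p.1 p.2 β j (z β) * ξ β j) ^ 2) :=
          mul_le_mul_of_nonneg_left (Finset.sum_le_sum fun β _ => h2 β) (Nat.cast_nonneg _)
      _ = (N : ℝ) * (d : ℝ) * (∑ β, ∑ j, b p.1 p.2 β j (z β) ^ 2 * ξ β j ^ 2) := by
          simp only [mul_pow, ← Finset.mul_sum]; ring
  have hptwise : ∀ (u : Finset (ℕ × Fin N)) (z : EuclideanSpace ℝ (Fin N)),
      lam * Ξ + (1/2) * ∑ p ∈ u, L p z ^ 2 ≤ q z := by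
    intro u z
    have h1 : lam * Ξ ≤ q z - (1/2) * ∑' p : ℕ × Fin N, L p z ^ 2 := by
      simpa only [hq, hL, hΞ] using hcoer z ξ
    have h2 : ∑ p ∈ u, L p z ^ 2 ≤ ∑' p : ℕ × Fin N, L p z ^ 2 :=
      Summable.sum_le_tsum u (fun _ _ => sq_nonneg _) (hLsummable z)
    linarith
  -- Step E : integrate
  have hU : ∀ u : Finset (ℕ × Fin N),
      ∑ p ∈ u, (∑ β, ∑ j, btil p.1 p.2 β j (y β) * ξ β j) ^ 2
        ≤ 2 * (∫ z, q z * ρ (y - z)) - 2 * (lam * Ξ) := by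
    intro u
    have hIlhs : Integrable (fun z =>
        lam * Ξ * ρ (y - z) + (1/2) * ∑ p ∈ u, L p z ^ 2 * ρ (y - z)) :=
      ((hρint y).const_mul _).add ((integrable_finset_sum _ fun p _ => hIL2 p).const_mul _)
    have hmono : (∫ z, (lam * Ξ * ρ (y - z) + (1/2) * ∑ p ∈ u, L p z ^ 2 * ρ (y - z)))
        ≤ ∫ z, q z * ρ (y - z) := by
      refine integral_mono hIlhs hIq fun z => ?_
      have h1 := mul_le_mul_of_nonneg_right (hptwise u z) (hρ0 y z)
      calc lam * Ξ * ρ (y - z) + (1/2) * ∑ p ∈ u, L p z ^ 2 * ρ (y - z)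
          = (lam * Ξ + (1/2) * ∑ p ∈ u, L p z ^ 2) * ρ (y - z) := by
            rw [← Finset.sum_mul]; ring
        _ ≤ q z * ρ (y - z) := h1
    have hlhs_eq : (∫ z, (lam * Ξ * ρ (y - z) + (1/2) * ∑ p ∈ u, L p z ^ 2 * ρ (y - z)))
        = lam * Ξ + (1/2) * ∑ p ∈ u, ∫ z, L p z ^ 2 * ρ (y - z) := by
      rw [integral_add ((hρint y).const_mul _)
        ((integrable_finset_sum _ fun p _ => hIL2 p).const_mul _),
        integral_const_mul, integral_const_mul, hρ1 y, mul_one,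
        integral_finset_sum _ fun p _ => hIL2 p]
    have hsum_le : ∑ p ∈ u, (∑ β, ∑ j, btil p.1 p.2 β j (y β) * ξ β j) ^ 2
        ≤ ∑ p ∈ u, ∫ z, L p z ^ 2 * ρ (y - z) :=
      Finset.sum_le_sum fun p _ => hJen p
    have := hlhs_eq ▸ hmono
    linarith
  have hTsumm : Summable (fun p : ℕ × Fin N =>
      (∑ β, ∑ j, btil p.1 p.2 β j (y β) * ξ β j) ^ 2) :=
    summable_of_sum_le (fun p => sq_nonneg _) hU
  have htsum := Summable.tsum_le_of_sum_le hTsumm hU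
  rw [hAeq]
  linarith
end
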